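/- Let n ≥ 1 and let p₀, …, pₙ, w₀, …, wₙ, a, b be real numbers with pᵢ > 0 for all i, wᵢ ∈ [0,1] for all i, w₀ = 1, p₀ = 2a, and pᵢ·(1/2 − wᵢ) = aᵢ and pᵢ·wᵢ = bᵢ for 1 ≤ i ≤ n, where aᵢ, bᵢ > 0. Then for every subset I ⊆ {1,…,n}, writing I₀ = I ∪ {0}: the conjunction (∑_{i∈I} aᵢ < a and ∑_{i∈I} bᵢ ≥ b) holds if and only if ((∑_{i∈I₀} pᵢwᵢ)/(∑_{i∈I₀} pᵢ) > 1/2 and ∑_{i∈I₀} pᵢwᵢ ≥ p₀ + b). -/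
import Mathlib


theorem knapsack_recall_reduction (n : ℕ) (hn : 1 ≤ n)
    (p w A B : Fin (n + 1) → ℝ) (a b : ℝ)
    (hp : ∀ i, 0 < p i) (hw : ∀ i, w i ∈ Set.Icc (0:ℝ) 1)
    (hw0 : w 0 = 1) (hp0 : p 0 = 2 * a)
    (hA : ∀ i, i ≠ 0 → p i * (1 / 2 - w i) = A i)
    (hB : ∀ i, i ≠ 0 → p i * w i = B i)
    (hApos : ∀ i, i ≠ 0 → 0 < A i) (hBpos : ∀ i, i ≠ 0 → 0 < B i)
    (I : Finset (Fin (n + 1))) (hI : 0 ∉ I) :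
    ((∑ i ∈ I, A i < a) ∧ (b ≤ ∑ i ∈ I, B i)) ↔
      ((∑ i ∈ insert 0 I, p i * w i) / (∑ i ∈ insert 0 I, p i) > 1 / 2 ∧
        p 0 + b ≤ ∑ i ∈ insert 0 I, p i * w i) := by
  have hSP : 0 < ∑ i ∈ insert 0 I, p i :=
    Finset.sum_pos (fun i _ => hp i) ⟨0, Finset.mem_insert_self _ _⟩
  have hpw : ∀ i ∈ I, p i * w i = B i := fun i hi =>
    hB i (fun h => hI (h ▸ hi))
  have hsum1 : ∑ i ∈ insert 0 I, p i * w i = 2 * a + ∑ i ∈ I, B i := by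
    rw [Finset.sum_insert hI, hw0, hp0, Finset.sum_congr rfl hpw]; ring
  have hsum2 : ∑ i ∈ I, p i = ∑ i ∈ I, (2 * A i + 2 * B i) := by
    refine Finset.sum_congr rfl fun i hi => ?_
    have hne : i ≠ 0 := fun h => hI (h ▸ hi)
    have := hA i hne; have := hB i hne; nlinarith [hA i hne, hB i hne]
  have hdiv : (∑ i ∈ insert 0 I, p i * w i) / (∑ i ∈ insert 0 I, p i) > 1 / 2
      ↔ (∑ i ∈ I, A i < a) := by
    rw [gt_iff_lt, div_lt_div_iff₀ (by norm_num) hSP] at *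
    rw [hsum1, Finset.sum_insert hI, hp0, hsum2, Finset.sum_add_distrib, ← Finset.mul_sum, ← Finset.mul_sum]
    constructor <;> intro h <;> linarith
  constructor
  · rintro ⟨h1, h2⟩
    exact ⟨hdiv.mpr h1, by rw [hsum1, hp0]; linarith⟩
  · rintro ⟨h1, h2⟩
    rw [hsum1, hp0] at h2
    exact ⟨hdiv.mp h1, by linarith⟩
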